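/- arXiv:2006.00125 — 2 statements merged into one kernel-verified Lean document; each statement's English description precedes it below -/
import Mathlib

section
/- Let A ∈ ℝ^{n×n}, B ∈ ℝ^{n×m}, x_0 ∈ ℝⁿ, and let (x_t) be the DGR closed-loop trajectory with α = 0. Set Ã = Π_{R(B)⊥} A and B̃ = Π_{R(B)} A. Define z_0 = x_0, z_t = x_t − Π_{V_t} x_t for t ≥ 1, and let z̄_t = z_t/‖z_t‖ if z_t ≠ 0 and z̄_t = 0 otherwise. Define a_t = ‖Ã^t A z̄_0‖ and b_{t,r} = ‖Ã^{t−r} B̃ z̄_r‖ for 1 ≤ r ≤ t, and define L_1 = ‖A z̄_0‖ and L_{t+1} = a_t + Σ_{r=1}^{t} b_{t,r} L_r for t ≥ 1. Then for all t ≥ 0, ‖x_{t+1}‖ ≤ L_{t+1} ‖x_0‖. -/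
open Matrix

noncomputable section

/-- The Euclidean norm on `Fin n → ℝ`. -/
def eucNorm {n : ℕ} (x : Fin n → ℝ) : ℝ := Real.sqrt (∑ i, (x i) ^ 2)

/-- `P` is the matrix of the orthogonal projection of `ℝⁿ` onto the subspace `V`:
the unique symmetric idempotent matrix whose range is `V`. -/
def IsProjMatrix {n : ℕ} (P : Matrix (Fin n) (Fin n) ℝ) (V : Submodule ℝ (Fin n → ℝ)) : Prop :=
  P.IsSymm ∧ P * P = P ∧ LinearMap.range P.mulVecLin = V

/-- A real square matrix is Schur stable if every complex eigenvalue has modulus `< 1`,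
i.e. its spectral radius is `< 1`. -/
def SchurStable {n : ℕ} (M : Matrix (Fin n) (Fin n) ℝ) : Prop :=
  ∀ (μ : ℂ) (v : Fin n → ℂ), v ≠ 0 →
    (M.map (algebraMap ℝ ℂ)).mulVec v = μ • v → ‖μ‖ < 1

/-- The operator norm of a matrix induced by the Euclidean vector norm:
`‖M‖ = sup {‖M u‖ : ‖u‖ = 1}`. -/
def l2OpNorm {n m : ℕ} (M : Matrix (Fin n) (Fin m) ℝ) : ℝ :=
  sSup {c | ∃ x : Fin m → ℝ, eucNorm x = 1 ∧ c = eucNorm (M.mulVec x)}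

/-- The instability number of order `t` of `A`:
`M_t(A) = sup { ∏ i ‖A v i‖ : (v 1, …, v t) orthonormal in ℝⁿ }`. -/
def instabilityNumber {n : ℕ} (A : Matrix (Fin n) (Fin n) ℝ) (t : ℕ) : ℝ :=
  sSup {c | ∃ v : Fin t → (Fin n → ℝ),
    (∀ i j, v i ⬝ᵥ v j = if i = j then 1 else 0) ∧ c = ∏ i, eucNorm (A.mulVec (v i))}

/-!
Since `V₀ = {0}`, the first step is `x₁ = A x₀`, and for `t ≥ 1` the dynamics split as
`x_{t+1} = Ã x_t + B̃ z_t` with `Ã = (1 - Π_B) A`, `B̃ = Π_B A`. Unrolling gives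
`x_{t+1} = Ãᵗ A x₀ + ∑_{r=1}^t Ã^{t-r} B̃ z_r`. Each term is bounded by writing
`z_r = ‖z_r‖ z̄_r`, and `‖z_r‖ ≤ ‖x_r‖` because `z_r` is the residual of an orthogonal
projection; strong induction on `t` then yields the recursive bound `L`.
-/

open Finset

section EucNorm

variable {n : ℕ}

lemma eucNorm_eq_norm_toLp (x : Fin n → ℝ) : eucNorm x = ‖WithLp.toLp 2 x‖ := by
  simp [EuclideanSpace.norm_eq, eucNorm, Real.norm_eq_abs, sq_abs]

lemma eucNorm_nonneg (x : Fin n → ℝ) : 0 ≤ eucNorm x := by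
  rw [eucNorm_eq_norm_toLp]
  exact norm_nonneg _

lemma eucNorm_add_le (x y : Fin n → ℝ) : eucNorm (x + y) ≤ eucNorm x + eucNorm y := by
  simp only [eucNorm_eq_norm_toLp, WithLp.toLp_add]
  exact norm_add_le _ _

lemma eucNorm_sum_le {ι : Type*} (s : Finset ι) (f : ι → Fin n → ℝ) :
    eucNorm (∑ i ∈ s, f i) ≤ ∑ i ∈ s, eucNorm (f i) := by
  simp only [eucNorm_eq_norm_toLp, WithLp.toLp_sum]
  exact norm_sum_le _ _

lemma eucNorm_smul (c : ℝ) (x : Fin n → ℝ) : eucNorm (c • x) = |c| * eucNorm x := by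
  simp only [eucNorm_eq_norm_toLp, WithLp.toLp_smul, norm_smul, Real.norm_eq_abs]

lemma eucNorm_eq_zero {x : Fin n → ℝ} : eucNorm x = 0 ↔ x = 0 := by
  rw [eucNorm_eq_norm_toLp, norm_eq_zero, WithLp.toLp_eq_zero]

@[simp]
lemma eucNorm_zero : eucNorm (0 : Fin n → ℝ) = 0 :=
  eucNorm_eq_zero.mpr rfl

lemma eucNorm_eq_sqrt_dotProduct (x : Fin n → ℝ) : eucNorm x = √(x ⬝ᵥ x) := by
  simp [eucNorm, dotProduct, sq]

/-- `x / ‖x‖`, with the convention `0 / ‖0‖ = 0`. -/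
def eucNormalize (x : Fin n → ℝ) : Fin n → ℝ :=
  if x = 0 then 0 else (eucNorm x)⁻¹ • x

lemma eucNorm_mulVec_eq_mul_eucNormalize {m : ℕ} (M : Matrix (Fin m) (Fin n) ℝ)
    (x : Fin n → ℝ) : eucNorm (M *ᵥ x) = eucNorm (M *ᵥ eucNormalize x) * eucNorm x := by
  by_cases hx : x = 0
  · simp [hx, eucNormalize]
  · have hpos : 0 < eucNorm x := (eucNorm_nonneg x).lt_of_ne' (eucNorm_eq_zero.not.mpr hx)
    rw [eucNormalize, if_neg hx, mulVec_smul, eucNorm_smul, abs_inv, abs_of_pos hpos,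
      mul_right_comm, inv_mul_cancel₀ hpos.ne', one_mul]

lemma eucNorm_mulVec_le_of_eucNorm_le {m : ℕ} (M : Matrix (Fin m) (Fin n) ℝ)
    {x : Fin n → ℝ} {c : ℝ} (hx : eucNorm x ≤ c) :
    eucNorm (M *ᵥ x) ≤ eucNorm (M *ᵥ eucNormalize x) * c := by
  rw [eucNorm_mulVec_eq_mul_eucNormalize]
  exact mul_le_mul_of_nonneg_left hx (eucNorm_nonneg _)

end EucNorm

section Projection

variable {n : ℕ} {P : Matrix (Fin n) (Fin n) ℝ}

lemma eucNorm_sub_mulVec_le (hs : P.IsSymm) (hi : P * P = P)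
    (y : Fin n → ℝ) : eucNorm (y - P *ᵥ y) ≤ eucNorm y := by
  rw [eucNorm_eq_sqrt_dotProduct, eucNorm_eq_sqrt_dotProduct]
  apply Real.sqrt_le_sqrt
  set p := P *ᵥ y
  have hpp : p ⬝ᵥ p = p ⬝ᵥ y := by
    rw [dotProduct_mulVec, ← mulVec_transpose, hs.eq, mulVec_mulVec, hi]
  have hyp : y ⬝ᵥ p = p ⬝ᵥ p := by rw [dotProduct_comm, hpp]
  have hnonneg : 0 ≤ p ⬝ᵥ p := sum_nonneg fun i _ => mul_self_nonneg _
  have hpyth : (y - p) ⬝ᵥ (y - p) = y ⬝ᵥ y - p ⬝ᵥ p := by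
    rw [sub_dotProduct, dotProduct_sub, dotProduct_sub, hyp, ← hpp]
    ring
  linarith

lemma IsProjMatrix.mulVec_eq_zero_of_eq_bot (hP : IsProjMatrix P ⊥) (y : Fin n → ℝ) :
    P *ᵥ y = 0 := by
  simpa using LinearMap.congr_fun (LinearMap.range_eq_bot.mp hP.2.2) y

end Projection

lemma eq_pow_mulVec_add_sum_of_mulVec_add {n : ℕ} (A At Bt : Matrix (Fin n) (Fin n) ℝ)
    (x z : ℕ → Fin n → ℝ) (hx1 : x 1 = A *ᵥ x 0)
    (hstep : ∀ t, 1 ≤ t → x (t + 1) = At *ᵥ x t + Bt *ᵥ z t) (t : ℕ) :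
    x (t + 1) = (At ^ t * A) *ᵥ x 0 + ∑ r ∈ Icc 1 t, (At ^ (t - r) * Bt) *ᵥ z r := by
  induction t with
  | zero => simp [hx1]
  | succ t ih =>
    have hshift : At *ᵥ ∑ r ∈ Icc 1 t, (At ^ (t - r) * Bt) *ᵥ z r
        = ∑ r ∈ Icc 1 t, (At ^ (t + 1 - r) * Bt) *ᵥ z r := by
      rw [mulVec_sum]
      refine sum_congr rfl fun r hr => ?_
      rw [mulVec_mulVec, ← mul_assoc, ← pow_succ', Nat.sub_add_comm (mem_Icc.mp hr).2]
    rw [hstep (t + 1) (by omega), ih, mulVec_add, mulVec_mulVec, ← mul_assoc, ← pow_succ',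
      hshift, sum_Icc_succ_top (by omega), Nat.sub_self, pow_zero, one_mul, add_assoc]

theorem stmt10_general {n : ℕ} (A : Matrix (Fin n) (Fin n) ℝ)
    (PB : Matrix (Fin n) (Fin n) ℝ)
    (x : ℕ → Fin n → ℝ)
    (Pv : ℕ → Matrix (Fin n) (Fin n) ℝ)
    (hPv : ∀ t, IsProjMatrix (Pv t)
      (Submodule.span ℝ (Set.range fun i : Fin t => x i.val)))
    (hdyn : ∀ t, x (t + 1) = A.mulVec (x t) - (PB * A).mulVec ((Pv t).mulVec (x t)))
    (z : ℕ → Fin n → ℝ) (hz0 : z 0 = x 0)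
    (hz : ∀ t, 1 ≤ t → z t = x t - (Pv t).mulVec (x t))
    (zbar : ℕ → Fin n → ℝ)
    (hzbar : ∀ t, zbar t = if z t = 0 then 0 else (eucNorm (z t))⁻¹ • z t)
    (a : ℕ → ℝ)
    (ha : ∀ t, a t = eucNorm ((((1 - PB) * A) ^ t * A).mulVec (zbar 0)))
    (b : ℕ → ℕ → ℝ)
    (hb : ∀ t r, 1 ≤ r → r ≤ t →
      b t r = eucNorm ((((1 - PB) * A) ^ (t - r) * (PB * A)).mulVec (zbar r)))
    (L : ℕ → ℝ)
    (hL1 : L 1 = eucNorm (A.mulVec (zbar 0)))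
    (hL : ∀ t, 1 ≤ t → L (t + 1) = a t + ∑ r ∈ Finset.Icc 1 t, b t r * L r) :
    ∀ t, eucNorm (x (t + 1)) ≤ L (t + 1) * eucNorm (x 0) := by
  have hzbar0 : zbar 0 = eucNormalize (x 0) := by rw [hzbar, hz0, eucNormalize]
  have hx1 : x 1 = A *ᵥ x 0 := by
    have hPv0 : IsProjMatrix (Pv 0) ⊥ := by simpa using hPv 0
    rw [hdyn 0, hPv0.mulVec_eq_zero_of_eq_bot, mulVec_zero, sub_zero]
  have hunroll := eq_pow_mulVec_add_sum_of_mulVec_add A ((1 - PB) * A) (PB * A) x z hx1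
    fun t ht => by
      rw [hdyn t, hz t ht, Matrix.sub_mul, one_mul, sub_mulVec, mulVec_sub]
      abel
  have hL' : ∀ t, L (t + 1) = a t + ∑ r ∈ Icc 1 t, b t r * L r := by
    rintro (_ | t)
    · simp [hL1, ha]
    · exact hL (t + 1) (by omega)
  intro t
  induction t using Nat.strong_induction_on with
  | _ t IH =>
    have hzr : ∀ r ∈ Icc 1 t, eucNorm (z r) ≤ L r * eucNorm (x 0) := by
      intro r hr
      obtain ⟨hr1, hrt⟩ := mem_Icc.mp hr
      obtain ⟨s, rfl⟩ := Nat.exists_eq_add_of_le' hr1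
      rw [hz _ hr1]
      exact (eucNorm_sub_mulVec_le (hPv _).1 (hPv _).2.1 _).trans (IH s (by omega))
    rw [hunroll t, hL' t, add_mul, sum_mul]
    refine (eucNorm_add_le _ _).trans (add_le_add ?_ ((eucNorm_sum_le _ _).trans
      (sum_le_sum fun r hr => ?_)))
    · rw [ha, hzbar0]
      exact eucNorm_mulVec_le_of_eucNorm_le _ le_rfl
    · rw [hb t r (mem_Icc.mp hr).1 (mem_Icc.mp hr).2, hzbar, mul_assoc]
      exact eucNorm_mulVec_le_of_eucNorm_le _ (hzr r hr)

/-- Recursive upper bound on the DGR state trajectory. -/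
theorem stmt10 {n m : ℕ} (A : Matrix (Fin n) (Fin n) ℝ) (B : Matrix (Fin n) (Fin m) ℝ)
    (PB : Matrix (Fin n) (Fin n) ℝ)
    (hPB : IsProjMatrix PB (LinearMap.range B.mulVecLin))
    (x : ℕ → Fin n → ℝ)
    (Pv : ℕ → Matrix (Fin n) (Fin n) ℝ)
    (hPv : ∀ t, IsProjMatrix (Pv t)
      (Submodule.span ℝ (Set.range fun i : Fin t => x i.val)))
    (hdyn : ∀ t, x (t + 1) = A.mulVec (x t) - (PB * A).mulVec ((Pv t).mulVec (x t)))
    (z : ℕ → Fin n → ℝ) (hz0 : z 0 = x 0)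
    (hz : ∀ t, 1 ≤ t → z t = x t - (Pv t).mulVec (x t))
    (zbar : ℕ → Fin n → ℝ)
    (hzbar : ∀ t, zbar t = if z t = 0 then 0 else (eucNorm (z t))⁻¹ • z t)
    (a : ℕ → ℝ)
    (ha : ∀ t, a t = eucNorm ((((1 - PB) * A) ^ t * A).mulVec (zbar 0)))
    (b : ℕ → ℕ → ℝ)
    (hb : ∀ t r, 1 ≤ r → r ≤ t →
      b t r = eucNorm ((((1 - PB) * A) ^ (t - r) * (PB * A)).mulVec (zbar r)))
    (L : ℕ → ℝ)
    (hL1 : L 1 = eucNorm (A.mulVec (zbar 0)))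
    (hL : ∀ t, 1 ≤ t → L (t + 1) = a t + ∑ r ∈ Finset.Icc 1 t, b t r * L r) :
    ∀ t, eucNorm (x (t + 1)) ≤ L (t + 1) * eucNorm (x 0) :=
  stmt10_general A PB x Pv hPv hdyn z hz0 hz zbar hzbar a ha b hb L hL1 hL
end
end

section
/- Let A ∈ ℝ^{n×n} be diagonalizable over ℂ with the column space of A contained in the column space of B ∈ ℝ^{n×m}. Suppose x_0 = Σ_{ℓ=1}^{k} β_ℓ u_ℓ where u_1, …, u_k ∈ ℂⁿ are linearly independent eigenvectors of A with eigenvalues λ_1, …, λ_k, all β_ℓ ∈ ℂ nonzero, and the set {λ_1, …, λ_k} consists of exactly r distinct values μ_1, …, μ_r. Let (x_t) be the DGR closed-loop trajectory with α = 0 started at x_0, and define the complex subspace S = span_ℂ{ Σ_{ℓ: λ_ℓ = μ_i} β_ℓ u_ℓ : i = 1, …, r }. Then the complex span of {x_0, x_1, …, x_{r−1}} equals S, and x_{r+1} = 0. -/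
/-!
Since `R(A) ⊆ R(B)`, the projection `Π_{R(B)}` acts trivially on `A`, so the closed loop reads
`x_{t+1} = A (x_t - Π_{V_t} x_t)` with `Π_{V_t} x_t ∈ V_t`. Then `V_{t+1} = span{x_0} + A V_t`,
the same recursion as for the Krylov spaces `span{x_0, A x_0, …, A^{t-1} x_0}`, so `V_t` is the
`t`-th Krylov space of `x_0`.

Grouping the eigenvectors by eigenvalue, `x_0 = ∑ᵢ wᵢ` with `A wᵢ = μᵢ wᵢ`, so
`A^t x_0 = ∑ᵢ μᵢ^t wᵢ`. As the `μᵢ` are distinct, Lagrange interpolation recovers each `wᵢ` from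
`x_0, …, A^{r-1} x_0`: the complex span of `V_r` is `S`. In particular `A^r x_0 ∈ V_r` (taking
real parts), so `x_r ∈ V_{r+1} = V_r`, hence `Π_{V_r} x_r = x_r` and `x_{r+1} = 0`.
-/

open Matrix

noncomputable section

open Submodule

lemma range_fin_eq_image_Iio {α : Type*} (x : ℕ → α) (t : ℕ) :
    (Set.range fun i : Fin t => x i) = x '' Set.Iio t := by
  rw [← Fin.range_val, ← Set.range_comp]
  rfl

section PrefixSpan

variable {R M : Type*} [Ring R] [AddCommGroup M] [Module R M]

variable (R) in
def prefixSpan (x : ℕ → M) (t : ℕ) : Submodule R M :=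
  span R (Set.range fun i : Fin t => x i)

@[simp]
lemma prefixSpan_zero (x : ℕ → M) : prefixSpan R x 0 = ⊥ := by
  simp [prefixSpan]

lemma prefixSpan_succ (x : ℕ → M) (t : ℕ) :
    prefixSpan R x (t + 1) = R ∙ x t ⊔ prefixSpan R x t := by
  rw [prefixSpan, prefixSpan, range_fin_eq_image_Iio, range_fin_eq_image_Iio,
    Set.Iio_add_one_eq_Iic, ← Set.Iio_insert, Set.image_insert_eq, span_insert]

lemma span_singleton_sub_sup {Z : Submodule R M} {a b : M} (hb : b ∈ Z) :
    R ∙ (a - b) ⊔ Z = R ∙ a ⊔ Z := by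
  apply le_antisymm <;> refine sup_le ?_ le_sup_right <;> rw [span_singleton_le_iff_mem]
  · exact sub_mem (mem_sup_left (mem_span_singleton_self a)) (mem_sup_right hb)
  · simpa using add_mem (mem_sup_left (mem_span_singleton_self (a - b))) (mem_sup_right hb)

variable {f : M →ₗ[R] M} {x p : ℕ → M}

lemma prefixSpan_succ_eq_sup_map (hp : ∀ t, p t ∈ prefixSpan R x t)
    (hx : ∀ t, x (t + 1) = f (x t - p t)) (t : ℕ) :
    prefixSpan R x (t + 1) = R ∙ x 0 ⊔ (prefixSpan R x t).map f := by
  induction t with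
  | zero => simp [prefixSpan_succ]
  | succ t ih =>
    conv_lhs => rw [prefixSpan_succ, ih, hx]
    rw [prefixSpan_succ x t, Submodule.map_sup, map_span, Set.image_singleton,
      map_sub, span_singleton_sub_sup (mem_sup_right (mem_map_of_mem (hp t))), sup_left_comm]

lemma prefixSpan_eq_of_iterate {y : ℕ → M} (hp : ∀ t, p t ∈ prefixSpan R x t)
    (hx : ∀ t, x (t + 1) = f (x t - p t)) (hy : ∀ t, y (t + 1) = f (y t)) (h0 : y 0 = x 0)
    (t : ℕ) : prefixSpan R x t = prefixSpan R y t := by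
  induction t with
  | zero => simp
  | succ t ih =>
    rw [prefixSpan_succ_eq_sup_map hp hx, prefixSpan_succ_eq_sup_map (p := 0) (fun _ => zero_mem _)
      (by simpa using hy), ih, h0]

lemma mem_prefixSpan_self_of_prefixSpan_eq {y : ℕ → M}
    (h : ∀ t, prefixSpan R x t = prefixSpan R y t) {r : ℕ} (hy : y r ∈ prefixSpan R y r) :
    x r ∈ prefixSpan R x r := by
  have hx : x r ∈ prefixSpan R x (r + 1) := by
    rw [prefixSpan_succ]; exact mem_sup_left (mem_span_singleton_self _)
  rwa [h, prefixSpan_succ, sup_eq_right.2 ((span_singleton_le_iff_mem _ _).2 hy), ← h] at hx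

end PrefixSpan

namespace IsProjMatrix

variable {n : ℕ} {P : Matrix (Fin n) (Fin n) ℝ} {V : Submodule ℝ (Fin n → ℝ)}

lemma mulVec_mem (hP : IsProjMatrix P V) (v : Fin n → ℝ) : P *ᵥ v ∈ V :=
  hP.2.2 ▸ ⟨v, rfl⟩

lemma mulVec_eq_self (hP : IsProjMatrix P V) {v : Fin n → ℝ} (hv : v ∈ V) : P *ᵥ v = v := by
  obtain ⟨z, rfl⟩ := hP.2.2 ▸ hv
  simp only [mulVecLin_apply, mulVec_mulVec, hP.2.1]

lemma mul_eq_right (hP : IsProjMatrix P V) {A : Matrix (Fin n) (Fin n) ℝ}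
    (hA : LinearMap.range A.mulVecLin ≤ V) : P * A = A :=
  toLin'.injective <| LinearMap.ext fun v => by
    rw [toLin'_apply, toLin'_apply, ← mulVec_mulVec, hP.mulVec_eq_self (v := A *ᵥ v) (hA ⟨v, rfl⟩)]

end IsProjMatrix

section Complexification

variable {ι : Type*}

variable (ι) in
def ofRealVec : (ι → ℝ) →ₗ[ℝ] (ι → ℂ) :=
  (Algebra.linearMap ℝ ℂ).compLeft ι

lemma ofRealVec_mulVec [Fintype ι] (A : Matrix ι ι ℝ) (v : ι → ℝ) :
    ofRealVec ι (A *ᵥ v) = A.map (algebraMap ℝ ℂ) *ᵥ ofRealVec ι v :=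
  funext (RingHom.map_mulVec (algebraMap ℝ ℂ) A v)

lemma span_ofRealVec_congr {κ κ' : Type*} {f : κ → ι → ℝ} {g : κ' → ι → ℝ}
    (h : span ℝ (Set.range f) = span ℝ (Set.range g)) :
    span ℂ (Set.range (ofRealVec ι ∘ f)) = span ℂ (Set.range (ofRealVec ι ∘ g)) := by
  have hspan (s : Set (ι → ℝ)) :
      span ℂ (ofRealVec ι '' s) = span ℂ ((span ℝ s).map (ofRealVec ι) : Set (ι → ℂ)) := by
    rw [map_span, span_span_of_tower]
  rw [Set.range_comp, Set.range_comp, hspan, hspan, h]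

lemma mem_span_of_ofRealVec_mem_span {κ : Type*} [Fintype κ] {g : κ → ι → ℝ} {v : ι → ℝ}
    (h : ofRealVec ι v ∈ span ℂ (Set.range (ofRealVec ι ∘ g))) : v ∈ span ℝ (Set.range g) := by
  obtain ⟨c, hc⟩ := (mem_span_range_iff_exists_fun ℂ).1 h
  refine (mem_span_range_iff_exists_fun ℝ).2 ⟨fun i => (c i).re, funext fun j => ?_⟩
  simpa [ofRealVec] using congrArg (fun w => (w j).re) hc

lemma ofRealVec_pow_mulVec [Fintype ι] [DecidableEq ι] {κ : Type*} [Fintype κ]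
    {A : Matrix ι ι ℝ} {v : ι → ℝ} {w : κ → ι → ℂ} {μ : κ → ℂ} (hv : ofRealVec ι v = ∑ i, w i)
    (hw : ∀ i, A.map (algebraMap ℝ ℂ) *ᵥ w i = μ i • w i) (t : ℕ) :
    ofRealVec ι ((A ^ t) *ᵥ v) = ∑ i, μ i ^ t • w i := by
  induction t with
  | zero => simpa using hv
  | succ t ih =>
    rw [pow_succ', ← mulVec_mulVec, ofRealVec_mulVec, ih, mulVec_sum]
    simp only [mulVec_smul, hw, smul_smul, pow_succ]

end Complexification

lemma Finset.sum_eq_sum_sum_filter_eq {κ ι K M : Type*} [Fintype κ] [Fintype ι] [DecidableEq K]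
    [AddCommMonoid M] {lam : κ → K} {μ : ι → K} (hμ : Function.Injective μ)
    (hlam : Set.range lam ⊆ Set.range μ) (v : κ → M) :
    ∑ ℓ, v ℓ = ∑ i, ∑ ℓ with lam ℓ = μ i, v ℓ := by
  rw [← Finset.sum_fiberwise_of_maps_to (t := Finset.univ.image μ) (g := lam)
    (fun ℓ _ => by simpa using hlam (Set.mem_range_self ℓ)), Finset.sum_image (by simpa using hμ)]

section Modes

variable {K M : Type*} [Field K] [AddCommGroup M] [Module K M]

lemma sum_smul_mem_eigenspace [DecidableEq K] {κ : Type*} {f : Module.End K M} {u : κ → M}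
    {lam : κ → K} (hu : ∀ ℓ, f (u ℓ) = lam ℓ • u ℓ) (β : κ → K) (s : Finset κ) (a : K) :
    ∑ ℓ ∈ s with lam ℓ = a, β ℓ • u ℓ ∈ f.eigenspace a :=
  sum_mem fun ℓ hℓ => smul_mem _ _ <| Module.End.mem_eigenspace_iff.2 <| by
    rw [Finset.mem_filter] at hℓ
    rw [hu, hℓ.2]

lemma sum_coeff_smul_sum_pow_smul {ι : Type*} [Fintype ι] (μ : ι → K) (w : ι → M)
    {p : Polynomial K} {N : ℕ} (hp : p.natDegree < N) :
    ∑ j ∈ Finset.range N, p.coeff j • ∑ i, μ i ^ j • w i = ∑ i, p.eval (μ i) • w i := by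
  simp_rw [Finset.smul_sum, smul_smul]
  rw [Finset.sum_comm]
  simp_rw [← Finset.sum_smul, Polynomial.eval_eq_sum_range' hp]

lemma span_range_sum_pow_smul {ι : Type*} [Fintype ι] [DecidableEq ι] {μ : ι → K}
    (hμ : Function.Injective μ) (w : ι → M) {N : ℕ} (hN : Fintype.card ι ≤ N) :
    span K (Set.range fun j : Fin N => ∑ i, μ i ^ (j : ℕ) • w i) = span K (Set.range w) := by
  apply le_antisymm <;> rw [span_le]
  · rintro _ ⟨j, rfl⟩
    exact sum_mem fun i _ => smul_mem _ _ (subset_span ⟨i, rfl⟩)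
  · rintro _ ⟨i, rfl⟩
    have hinj : Set.InjOn μ (Finset.univ : Finset ι) := hμ.injOn
    have hdeg : (Lagrange.basis Finset.univ μ i).natDegree < N := by
      rw [Lagrange.natDegree_basis hinj (Finset.mem_univ i), Finset.card_univ]
      have := Fintype.card_pos_iff.2 ⟨i⟩
      omega
    have hw : w i = ∑ j ∈ Finset.range N,
        (Lagrange.basis Finset.univ μ i).coeff j • ∑ i', μ i' ^ j • w i' := by
      rw [sum_coeff_smul_sum_pow_smul μ w hdeg, Fintype.sum_eq_single i fun i' hi' => by
        rw [Lagrange.eval_basis_of_ne hi'.symm (Finset.mem_univ i'), zero_smul],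
        Lagrange.eval_basis_self hinj (Finset.mem_univ i), one_smul]
    rw [SetLike.mem_coe, hw]
    exact sum_mem fun j hj => smul_mem _ _ (subset_span ⟨⟨j, Finset.mem_range.1 hj⟩, rfl⟩)

end Modes

theorem stmt17_general {n m : ℕ} (A : Matrix (Fin n) (Fin n) ℝ) (B : Matrix (Fin n) (Fin m) ℝ)
    (hcol : LinearMap.range A.mulVecLin ≤ LinearMap.range B.mulVecLin)
    (PB : Matrix (Fin n) (Fin n) ℝ)
    (hPB : IsProjMatrix PB (LinearMap.range B.mulVecLin))
    (k : ℕ) (lam : Fin k → ℂ) (u : Fin k → (Fin n → ℂ))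
    (heig : ∀ ℓ, (A.map (algebraMap ℝ ℂ)).mulVec (u ℓ) = lam ℓ • u ℓ)
    (β : Fin k → ℂ)
    (x : ℕ → Fin n → ℝ)
    (hx0 : (fun j => (x 0 j : ℂ)) = ∑ ℓ, β ℓ • u ℓ)
    (Pv : ℕ → Matrix (Fin n) (Fin n) ℝ)
    (hPv : ∀ t, IsProjMatrix (Pv t)
      (Submodule.span ℝ (Set.range fun i : Fin t => x i.val)))
    (hdyn : ∀ t, x (t + 1) = A.mulVec (x t) - (PB * A).mulVec ((Pv t).mulVec (x t)))
    (r : ℕ) (μ : Fin r → ℂ) (hμinj : Function.Injective μ)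
    (hμrange : Set.range lam = Set.range μ)
    (S : Submodule ℂ (Fin n → ℂ))
    (hS : S = Submodule.span ℂ (Set.range fun i : Fin r =>
      ∑ ℓ ∈ Finset.univ.filter (fun ℓ : Fin k => lam ℓ = μ i), β ℓ • u ℓ)) :
    Submodule.span ℂ (Set.range fun i : Fin r => (fun j => (x i.val j : ℂ))) = S ∧
      x (r + 1) = 0 := by
  set w : Fin r → Fin n → ℂ := fun i => ∑ ℓ with lam ℓ = μ i, β ℓ • u ℓ
  set y : ℕ → Fin n → ℝ := fun t => (A ^ t) *ᵥ x 0
  have hxdyn (t : ℕ) : x (t + 1) = A.mulVecLin (x t - Pv t *ᵥ x t) := by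
    rw [hdyn, hPB.mul_eq_right hcol, mulVecLin_apply, mulVec_sub]
  have hV : ∀ t, prefixSpan ℝ x t = prefixSpan ℝ y t :=
    prefixSpan_eq_of_iterate (fun t => (hPv t).mulVec_mem _) hxdyn
      (fun t => by simp [y, pow_succ']) (by simp [y])
  have hw (i : Fin r) : A.map (algebraMap ℝ ℂ) *ᵥ w i = μ i • w i :=
    Module.End.mem_eigenspace_iff.1 (sum_smul_mem_eigenspace (f := (A.map _).mulVecLin) heig β _ _)
  have hy : ∀ t, ofRealVec _ (y t) = ∑ i, μ i ^ t • w i :=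
    ofRealVec_pow_mulVec (hx0.trans (Finset.sum_eq_sum_sum_filter_eq hμinj hμrange.le _)) hw
  have hspan : span ℂ (Set.range (ofRealVec _ ∘ fun i : Fin r => y i)) = span ℂ (Set.range w) := by
    simp_rw [Function.comp_def, hy]
    exact span_range_sum_pow_smul hμinj w (Fintype.card_fin r).le
  refine ⟨hS ▸ hspan ▸ span_ofRealVec_congr (hV r), ?_⟩
  have hyr : y r ∈ prefixSpan ℝ y r := mem_span_of_ofRealVec_mem_span <| by
    rw [hspan, hy]
    exact sum_mem fun i _ => smul_mem _ _ (subset_span ⟨i, rfl⟩)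
  rw [hxdyn, (hPv r).mulVec_eq_self (mem_prefixSpan_self_of_prefixSpan_eq hV hyr), sub_self,
    map_zero]

/-- The DGR data spans exactly the subspace of excited modes, and the state is
regulated to zero after `r + 1` steps. -/
theorem stmt17 {n m : ℕ} (A : Matrix (Fin n) (Fin n) ℝ) (B : Matrix (Fin n) (Fin m) ℝ)
    (hdiag : ∃ P D : Matrix (Fin n) (Fin n) ℂ,
      IsUnit P.det ∧ D.IsDiag ∧ A.map (algebraMap ℝ ℂ) = P * D * P⁻¹)
    (hcol : LinearMap.range A.mulVecLin ≤ LinearMap.range B.mulVecLin)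
    (PB : Matrix (Fin n) (Fin n) ℝ)
    (hPB : IsProjMatrix PB (LinearMap.range B.mulVecLin))
    (k : ℕ) (lam : Fin k → ℂ) (u : Fin k → (Fin n → ℂ))
    (hu : LinearIndependent ℂ u)
    (heig : ∀ ℓ, (A.map (algebraMap ℝ ℂ)).mulVec (u ℓ) = lam ℓ • u ℓ)
    (β : Fin k → ℂ) (hβ : ∀ ℓ, β ℓ ≠ 0)
    (x : ℕ → Fin n → ℝ)
    (hx0 : (fun j => (x 0 j : ℂ)) = ∑ ℓ, β ℓ • u ℓ)
    (Pv : ℕ → Matrix (Fin n) (Fin n) ℝ)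
    (hPv : ∀ t, IsProjMatrix (Pv t)
      (Submodule.span ℝ (Set.range fun i : Fin t => x i.val)))
    (hdyn : ∀ t, x (t + 1) = A.mulVec (x t) - (PB * A).mulVec ((Pv t).mulVec (x t)))
    (r : ℕ) (μ : Fin r → ℂ) (hμinj : Function.Injective μ)
    (hμrange : Set.range lam = Set.range μ)
    (S : Submodule ℂ (Fin n → ℂ))
    (hS : S = Submodule.span ℂ (Set.range fun i : Fin r =>
      ∑ ℓ ∈ Finset.univ.filter (fun ℓ : Fin k => lam ℓ = μ i), β ℓ • u ℓ)) :
    Submodule.span ℂ (Set.range fun i : Fin r => (fun j => (x i.val j : ℂ))) = S ∧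
      x (r + 1) = 0 :=
  stmt17_general A B hcol PB hPB k lam u heig β x hx0 Pv hPv hdyn r μ hμinj hμrange S hS
end
end
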